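/- Let η : ℝ → ℝ be continuously differentiable with η > 0 on [0,L₁], let μ ∈ ℝ, let u, φ : ℝ² → ℝ² be continuously differentiable, and let p : ℝ² → ℝ be continuous. Set û = u∘A_η, φ̂ = φ∘A_η, define the Cauchy stress T(x) = 2μ·(Du(x) + Du(x)ᵀ) − p(x)·I (I the 2×2 identity), and define τ̂(x̂) = 2μ·[ (Dû(x̂)·F(η)(x̂)^{-1}) + (Dû(x̂)·F(η)(x̂)^{-1})ᵀ ] − p(A_η(x̂))·I. Then ∫_{Ω_η} T(x) : Dφ(x) dλ²(x) = ∫_{Ω̂} τ̂(x̂) : ( Dφ̂(x̂)·F(η)(x̂)^{-1} ) · η(x̂₁) dλ²(x̂). -/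

import Mathlib

open MeasureTheory Matrix

/-- The subgraph domain `Ω_η = {(x₁,x₂) : x₁ ∈ (0,L₁), 0 < x₂ < η(x₁)}`. -/
def subgraph (L₁ : ℝ) (η : ℝ → ℝ) : Set (ℝ × ℝ) :=
  {p : ℝ × ℝ | p.1 ∈ Set.Ioo 0 L₁ ∧ p.2 ∈ Set.Ioo 0 (η p.1)}

/-- The reference domain `Ω̂ = (0,L₁) × (0,1)`. -/
def refDomain (L₁ : ℝ) : Set (ℝ × ℝ) := Set.Ioo 0 L₁ ×ˢ Set.Ioo (0 : ℝ) 1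

/-- The ALE map `A_η(x̂₁,x̂₂) = (x̂₁, η(x̂₁)·x̂₂)`. -/
def aleMap (η : ℝ → ℝ) (x : ℝ × ℝ) : ℝ × ℝ := (x.1, η x.1 * x.2)

/-- The Jacobian matrix `(Du)_{ij} = ∂_j u_i` of a map `u : ℝ² → ℝ²`. -/
noncomputable def jac (u : ℝ × ℝ → ℝ × ℝ) (x : ℝ × ℝ) : Matrix (Fin 2) (Fin 2) ℝ :=
  !![(fderiv ℝ u x (1, 0)).1, (fderiv ℝ u x (0, 1)).1;
     (fderiv ℝ u x (1, 0)).2, (fderiv ℝ u x (0, 1)).2]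

/-- The Jacobian `F(η)(x̂)` of the ALE map, with rows `(1,0)` and
`(x̂₂·η′(x̂₁), η(x̂₁))`. -/
noncomputable def matF (η : ℝ → ℝ) (x : ℝ × ℝ) : Matrix (Fin 2) (Fin 2) ℝ :=
  !![1, 0; x.2 * deriv η x.1, η x.1]

/-- The Frobenius contraction `A : B = Σ_{i,j} A_{ij} B_{ij}`. -/
def frob (A B : Matrix (Fin 2) (Fin 2) ℝ) : ℝ := ∑ i, ∑ j, A i j * B i j

/-- The Cauchy stress `T(x) = 2μ(Du(x) + Du(x)ᵀ) − p(x)·I`. -/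
noncomputable def cauchyStress (μ : ℝ) (u : ℝ × ℝ → ℝ × ℝ) (p : ℝ × ℝ → ℝ)
    (x : ℝ × ℝ) : Matrix (Fin 2) (Fin 2) ℝ :=
  (2 * μ) • (jac u x + (jac u x)ᵀ) - p x • (1 : Matrix (Fin 2) (Fin 2) ℝ)

/-- The transformed stress
`τ̂(x̂) = 2μ[(Dû F(η)⁻¹) + (Dû F(η)⁻¹)ᵀ] − p(A_η(x̂))·I`, where `û = u∘A_η`. -/
noncomputable def stressRef (μ : ℝ) (η : ℝ → ℝ) (u : ℝ × ℝ → ℝ × ℝ) (p : ℝ × ℝ → ℝ)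
    (xh : ℝ × ℝ) : Matrix (Fin 2) (Fin 2) ℝ :=
  (2 * μ) • ((jac (u ∘ aleMap η) xh * (matF η xh)⁻¹)
      + (jac (u ∘ aleMap η) xh * (matF η xh)⁻¹)ᵀ)
    - p (aleMap η xh) • (1 : Matrix (Fin 2) (Fin 2) ℝ)

/-- The derivative of the ALE map, as a continuous linear map. -/
noncomputable def aleD (η : ℝ → ℝ) (x : ℝ × ℝ) : ℝ × ℝ →L[ℝ] ℝ × ℝ :=
  LinearMap.toContinuousLinearMap
    (Matrix.toLin (Module.Basis.finTwoProd ℝ) (Module.Basis.finTwoProd ℝ) (matF η x))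

lemma aleD_apply (η : ℝ → ℝ) (x v : ℝ × ℝ) :
    aleD η x v = (v.1, x.2 * deriv η x.1 * v.1 + η x.1 * v.2) := by
  simp [aleD, matF]

lemma aleD_det (η : ℝ → ℝ) (x : ℝ × ℝ) : (aleD η x).det = η x.1 := by
  rw [aleD, LinearMap.det_toContinuousLinearMap, LinearMap.det_toLin, matF,
    Matrix.det_fin_two_of]
  ring

lemma hasFDerivAt_aleMap (η : ℝ → ℝ) (hη : ContDiff ℝ 1 η) (x : ℝ × ℝ) :
    HasFDerivAt (aleMap η) (aleD η x) x := by
  have hd : DifferentiableAt ℝ η x.1 := (hη.differentiable one_ne_zero).differentiableAt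
  have h1 : HasFDerivAt (fun y : ℝ × ℝ => η y.1)
      ((deriv η x.1) • ContinuousLinearMap.fst ℝ ℝ ℝ) x :=
    hd.hasDerivAt.comp_hasFDerivAt x hasFDerivAt_fst
  have h2 := h1.mul hasFDerivAt_snd
  have h3 := HasFDerivAt.prodMk hasFDerivAt_fst h2
  have he : aleD η x = (ContinuousLinearMap.fst ℝ ℝ ℝ).prod
      (η x.1 • ContinuousLinearMap.snd ℝ ℝ ℝ +
        x.2 • (deriv η x.1) • ContinuousLinearMap.fst ℝ ℝ ℝ) := by
    ext v <;> simp [aleD_apply]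
  rw [he]
  exact h3

lemma jac_comp (η : ℝ → ℝ) (hη : ContDiff ℝ 1 η) (v : ℝ × ℝ → ℝ × ℝ)
    (hv : ContDiff ℝ 1 v) (x : ℝ × ℝ) :
    jac (v ∘ aleMap η) x = jac v (aleMap η x) * matF η x := by
  have hA := hasFDerivAt_aleMap η hη x
  have hv' : HasFDerivAt v (fderiv ℝ v (aleMap η x)) (aleMap η x) :=
    (hv.differentiable one_ne_zero (aleMap η x)).hasFDerivAt
  have hf : fderiv ℝ (v ∘ aleMap η) x = (fderiv ℝ v (aleMap η x)).comp (aleD η x) :=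
    (hv'.comp x hA).fderiv
  set L := fderiv ℝ v (aleMap η x) with hLdef
  have hL : ∀ a b : ℝ, L (a, b) = a • L (1, 0) + b • L (0, 1) := by
    intro a b
    have h : ((a, b) : ℝ × ℝ) = a • ((1 : ℝ), (0 : ℝ)) + b • ((0 : ℝ), (1 : ℝ)) := by
      simp
    rw [h, map_add, ContinuousLinearMap.map_smul, ContinuousLinearMap.map_smul]
  have h10 : fderiv ℝ (v ∘ aleMap η) x (1, 0) = L (1, x.2 * deriv η x.1) := by
    rw [hf]
    simp [aleD_apply]
  have h01 : fderiv ℝ (v ∘ aleMap η) x (0, 1) = L (0, η x.1) := by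
    rw [hf]
    simp [aleD_apply]
  have k1 : L (1, x.2 * deriv η x.1) = L (1, 0) + (x.2 * deriv η x.1) • L (0, 1) := by
    rw [hL]
    simp
  have k2 : L (0, η x.1) = (η x.1) • L (0, 1) := by
    rw [hL]
    simp
  ext i j
  fin_cases i <;> fin_cases j <;>
    · simp [jac, matF, h10, h01, k1, k2, Matrix.mul_apply, Fin.sum_univ_two]
      ring

lemma image_aleMap (L₁ : ℝ) (η : ℝ → ℝ) (hpos : ∀ x₁ ∈ Set.Icc (0 : ℝ) L₁, 0 < η x₁) :
    aleMap η '' refDomain L₁ = subgraph L₁ η := by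
  ext y
  constructor
  · rintro ⟨x, ⟨hx1, hx2⟩, rfl⟩
    have hη : 0 < η x.1 := hpos x.1 ⟨hx1.1.le, hx1.2.le⟩
    exact ⟨hx1, mul_pos hη hx2.1, by
      simpa [aleMap] using mul_lt_of_lt_one_right hη hx2.2⟩
  · rintro ⟨hy1, hy2⟩
    have hη : 0 < η y.1 := hpos y.1 ⟨hy1.1.le, hy1.2.le⟩
    refine ⟨(y.1, y.2 / η y.1), ⟨hy1, div_pos hy2.1 hη, (div_lt_one hη).2 hy2.2⟩, ?_⟩
    simp [aleMap, mul_div_cancel₀ _ hη.ne']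

lemma injOn_aleMap (L₁ : ℝ) (η : ℝ → ℝ) (hpos : ∀ x₁ ∈ Set.Icc (0 : ℝ) L₁, 0 < η x₁) :
    Set.InjOn (aleMap η) (refDomain L₁) := by
  rintro a ⟨ha1, _⟩ b ⟨hb1, _⟩ hab
  simp only [aleMap, Prod.mk.injEq] at hab
  obtain ⟨h1, h2⟩ := hab
  have hη : 0 < η a.1 := hpos a.1 ⟨ha1.1.le, ha1.2.le⟩
  rw [h1] at hη h2
  exact Prod.ext h1 (mul_left_cancel₀ hη.ne' h2)

/-- Transformation of the stress term onto the reference domain: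
`∫_{Ω_η} T : Dφ dx = ∫_{Ω̂} τ̂ : (Dφ̂ F(η)⁻¹) η dx̂` (cf. the proof of Lemma on the
weak formulation on the reference domain and \eqref{tauref}). -/
theorem stress_term_on_reference_domain
    (L₁ : ℝ) (hL : 0 < L₁) (μ : ℝ)
    (η : ℝ → ℝ) (hη : ContDiff ℝ 1 η) (hpos : ∀ x₁ ∈ Set.Icc (0 : ℝ) L₁, 0 < η x₁)
    (u φ : ℝ × ℝ → ℝ × ℝ) (hu : ContDiff ℝ 1 u) (hφ : ContDiff ℝ 1 φ)
    (p : ℝ × ℝ → ℝ) (hp : Continuous p) :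
    ∫ x in subgraph L₁ η, frob (cauchyStress μ u p x) (jac φ x)
      = ∫ xh in refDomain L₁,
          frob (stressRef μ η u p xh) (jac (φ ∘ aleMap η) xh * (matF η xh)⁻¹) * η xh.1 := by
  have hmeas : MeasurableSet (refDomain L₁) :=
    (measurableSet_Ioo.prod measurableSet_Ioo)
  have hderiv : ∀ x ∈ refDomain L₁,
      HasFDerivWithinAt (aleMap η) (aleD η x) (refDomain L₁) x :=
    fun x _ => (hasFDerivAt_aleMap η hη x).hasFDerivWithinAt
  rw [← image_aleMap L₁ η hpos,
    integral_image_eq_integral_abs_det_fderiv_smul volume hmeas hderiv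
      (injOn_aleMap L₁ η hpos)]
  refine setIntegral_congr_fun hmeas ?_
  rintro x ⟨hx1, _⟩
  dsimp only
  have hηx : 0 < η x.1 := hpos x.1 ⟨hx1.1.le, hx1.2.le⟩
  have hdetF : IsUnit (matF η x).det := by
    rw [matF, Matrix.det_fin_two_of]
    simpa using (isUnit_iff_ne_zero.2 (by nlinarith : (1 : ℝ) * η x.1 - 0 * (x.2 * deriv η x.1) ≠ 0))
  have hcancel : ∀ (v : ℝ × ℝ → ℝ × ℝ), ContDiff ℝ 1 v →
      jac (v ∘ aleMap η) x * (matF η x)⁻¹ = jac v (aleMap η x) := by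
    intro v hv
    rw [jac_comp η hη v hv x, Matrix.mul_nonsing_inv_cancel_right _ _ hdetF]
  have hstress : stressRef μ η u p x = cauchyStress μ u p (aleMap η x) := by
    rw [stressRef, cauchyStress, hcancel u hu]
  rw [hstress, hcancel φ hφ, aleD_det, abs_of_pos hηx, smul_eq_mul]
  ring
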